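/- Let d₀ : C⁰ → C¹ and d₁ : C¹ → C² be linear maps with d₁ ∘ d₀ = 0, let ⋆₂ be symmetric positive definite on C², and let A : C¹ → C¹ and B : C⁰ → C⁰ be symmetric positive definite. If ψ ∈ C¹ satisfies (d₁ᵀ ⋆₂ d₁ + A d₀ B d₀ᵀ A) ψ = d₁ᵀ ⋆₂ f for some f ∈ C², then ψ also satisfies (d₁ᵀ ⋆₂ d₁) ψ = d₁ᵀ ⋆₂ f and moreover d₀ B d₀ᵀ A ψ = 0. -/

import Mathlib

open Matrix

/-- Gauge fixing for the streamform solve: for arbitrary symmetric positive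
definite `A`, `B`, any solution of the gauge-fixed system
`(d₁ᵀ ⋆₂ d₁ + A d₀ B d₀ᵀ A) ψ = d₁ᵀ ⋆₂ f` also solves `(d₁ᵀ ⋆₂ d₁) ψ = d₁ᵀ ⋆₂ f`
and satisfies `d₀ B d₀ᵀ A ψ = 0`. -/
theorem stmt6 {n0 n1 n2 : ℕ}
    (d0 : Matrix (Fin n1) (Fin n0) ℝ) (d1 : Matrix (Fin n2) (Fin n1) ℝ)
    (hcochain : d1 * d0 = 0)
    (S2 : Matrix (Fin n2) (Fin n2) ℝ) (hS2symm : S2.IsSymm) (hS2pos : S2.PosDef)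
    (A : Matrix (Fin n1) (Fin n1) ℝ) (hAsymm : A.IsSymm) (hApos : A.PosDef)
    (B : Matrix (Fin n0) (Fin n0) ℝ) (hBsymm : B.IsSymm) (hBpos : B.PosDef)
    (ψ : Fin n1 → ℝ) (f : Fin n2 → ℝ)
    (hψ : (d1ᵀ * S2 * d1 + A * d0 * B * d0ᵀ * A).mulVec ψ = (d1ᵀ * S2).mulVec f) :
    (d1ᵀ * S2 * d1).mulVec ψ = (d1ᵀ * S2).mulVec f ∧
      (d0 * B * d0ᵀ * A).mulVec ψ = 0 := by
  have hdd : d0ᵀ * d1ᵀ = 0 := by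
    rw [← Matrix.transpose_mul, hcochain, Matrix.transpose_zero]
  set x := (B * d0ᵀ * A).mulVec ψ with hx
  set u := d0.mulVec x with hu
  -- multiply the equation by d0ᵀ on the left
  have key : (d0ᵀ * A * d0).mulVec x = 0 := by
    have h := congrArg (fun v => d0ᵀ.mulVec v) hψ
    simp only [Matrix.add_mulVec, Matrix.mulVec_mulVec, Matrix.mulVec_add] at h
    have h1 : d0ᵀ * (d1ᵀ * S2 * d1) = 0 := by
      simp only [← Matrix.mul_assoc]
      rw [hdd, Matrix.zero_mul, Matrix.zero_mul]
    have h2 : d0ᵀ * (d1ᵀ * S2) = 0 := by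
      rw [← Matrix.mul_assoc, hdd, Matrix.zero_mul]
    rw [h1, h2] at h
    simp only [Matrix.zero_mulVec, zero_add] at h
    have h3 : d0ᵀ * (A * d0 * B * d0ᵀ * A) = d0ᵀ * A * d0 * (B * d0ᵀ * A) := by
      simp only [Matrix.mul_assoc]
    rw [h3, ← Matrix.mulVec_mulVec] at h
    exact h
  have hAd : (A * d0)ᵀ.mulVec u = 0 := by
    rw [hu, Matrix.mulVec_mulVec, Matrix.transpose_mul, hAsymm.eq]
    exact key
  have hquad : u ⬝ᵥ A.mulVec u = 0 := by
    have hAu : A.mulVec u = (A * d0).mulVec x := by rw [hu, Matrix.mulVec_mulVec]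
    rw [hAu, Matrix.dotProduct_mulVec, ← Matrix.mulVec_transpose, hAd]
    simp
  have hu0 : u = 0 := by
    by_contra h
    have := hApos.dotProduct_mulVec_pos h
    simp only [RCLike.star_def, star_trivial] at this
    rw [hquad] at this
    exact lt_irrefl 0 this
  have hgoal2 : (d0 * B * d0ᵀ * A).mulVec ψ = 0 := by
    have : (d0 * B * d0ᵀ * A).mulVec ψ = d0.mulVec x := by
      rw [hx, Matrix.mulVec_mulVec]
      simp only [Matrix.mul_assoc]
    rw [this, ← hu, hu0]
  refine ⟨?_, hgoal2⟩
  have hA0 : (A * d0 * B * d0ᵀ * A).mulVec ψ = 0 := by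
    have h4 : A * d0 * B * d0ᵀ * A = A * (d0 * B * d0ᵀ * A) := by
      simp only [Matrix.mul_assoc]
    rw [h4, ← Matrix.mulVec_mulVec, hgoal2, Matrix.mulVec_zero]
  rw [Matrix.add_mulVec, hA0, add_zero] at hψ
  exact hψ
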